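/- Let C, D be linear codes in F_q^n with generator matrices G_C (k_C × n, rows spanning C) and G_D, and parity check matrices H_C, H_D (rows spanning C^⊥, D^⊥ respectively). If the matrix G_C H_D^T has a right inverse, then C ∩ D = {0}. -/

import Mathlib

open Matrix

theorem Matrix.eq_zero_of_vecMul_eq_zero_of_mul_eq_one {R m n : Type*} [Semiring R]
    [Fintype m] [Fintype n] [DecidableEq m] {A : Matrix m n R} {M : Matrix n m R}
    (hM : A * M = 1) {c : m → R} (hc : c ᵥ* A = 0) : c = 0 := by
  rw [← vecMul_one c, ← hM, ← vecMul_vecMul, hc, zero_vecMul]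

theorem Matrix.exists_eq_vecMul_of_mem_span_rows {R m n : Type*} [Semiring R] [Fintype m]
    {G : Matrix m n R} {x : n → R} (hx : x ∈ Submodule.span R (Set.range fun i => G i)) :
    ∃ c : m → R, x = c ᵥ* G := by
  rw [← row_def G, ← range_vecMulLinear] at hx
  obtain ⟨c, rfl⟩ := hx
  exact ⟨c, rfl⟩

/-- If the rows of `GC` span `C`, `HD` is a parity-check matrix of `D`
(i.e. `x ∈ D ↔ HD x^T = 0`), and `GC * HDᵀ` is right-invertible, then `C ∩ D = {0}`. -/
theorem stmt4 {F : Type*} [Field F] {n kC kH : ℕ} (C D : Submodule F (Fin n → F))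
    (GC : Matrix (Fin kC) (Fin n) F) (HD : Matrix (Fin kH) (Fin n) F)
    (hGC : C = Submodule.span F (Set.range fun i => GC i))
    (hHD : ∀ x : Fin n → F, x ∈ D ↔ HD.mulVec x = 0)
    (hinv : ∃ M : Matrix (Fin kH) (Fin kC) F, GC * HD.transpose * M = 1) :
    C ⊓ D = ⊥ := by
  obtain ⟨M, hM⟩ := hinv
  refine (Submodule.eq_bot_iff _).mpr fun x ⟨hxC, hxD⟩ => ?_
  obtain ⟨c, rfl⟩ := exists_eq_vecMul_of_mem_span_rows (hGC ▸ hxC)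
  have hc : c ᵥ* (GC * HD.transpose) = 0 := by
    rw [← vecMul_vecMul, vecMul_transpose, ← hHD]
    exact hxD
  rw [eq_zero_of_vecMul_eq_zero_of_mul_eq_one hM hc, zero_vecMul]
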